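/- Let θ, γ, ρ > 0 and ξ ∈ ℝ be constants, and let P₀ > 0 and G₀ > 0 denote the initial training resource and heterogeneity. Define the convergence-bound function h(P, G) = θ/P + γ·G²/P + ρ·G² + ξ for P > 0, G ≥ 0. If the population is partitioned into K ≥ 1 cohorts so that each cohort has training resource P = P₀/K and heterogeneity G satisfying G² = G₀²/K (i.e., intra-cohort heterogeneity reduced by √K times), and if P ≥ √((θ·P₀)/(ρ·G₀²)), then h(P, G) ≤ h(P₀, G₀). -/

import Mathlib

/-!
Partitioning leaves `G²/P` unchanged, so the `γ`-term is invariant, and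
`h(P₀/K, G) - h(P₀, G₀) = (K - 1) (θ/P₀ - ρ G₀²/K)`.
The resource condition `√(θ P₀ / (ρ G₀²)) ≤ P₀/K` gives `θ K² ≤ ρ G₀² P₀`, hence
`θ K ≤ ρ G₀² P₀` since `K ≥ 1`, which makes the second factor nonpositive.
-/

noncomputable def convergenceBound (θ γ ρ ξ P G : ℝ) : ℝ :=
  θ / P + γ * G ^ 2 / P + ρ * G ^ 2 + ξ

theorem convergenceBound_partition (θ γ ρ ξ P₀ G₀ K G : ℝ) (hP₀ : P₀ ≠ 0) (hK : K ≠ 0)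
    (hG2 : G ^ 2 = G₀ ^ 2 / K) :
    convergenceBound θ γ ρ ξ (P₀ / K) G
      = convergenceBound θ γ ρ ξ P₀ G₀ + (K - 1) * (θ / P₀ - ρ * G₀ ^ 2 / K) := by
  unfold convergenceBound
  rw [hG2]
  field_simp
  ring

theorem mul_le_of_sqrt_div_le_div {θ c P₀ K : ℝ} (hc : 0 < c) (hP₀ : 0 < P₀) (hK : 1 ≤ K)
    (h : √(θ * P₀ / c) ≤ P₀ / K) : θ * K ≤ c * P₀ := by
  have hK0 : 0 < K := zero_lt_one.trans_le hK
  have hsq : θ * P₀ / c ≤ (P₀ / K) ^ 2 := (Real.sqrt_le_iff.1 h).2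
  have hK2 : θ * K ^ 2 ≤ c * P₀ := by
    rw [div_le_iff₀ hc, div_pow, div_mul_eq_mul_div, le_div_iff₀ (by positivity)] at hsq
    nlinarith
  calc θ * K = θ * K ^ 2 / K := by field_simp
    _ ≤ c * P₀ / K := div_le_div_of_nonneg_right hK2 hK0.le
    _ ≤ c * P₀ := div_le_self (by positivity) hK

theorem cohort_partition_no_degradation_general
    (θ γ ρ ξ P₀ G₀ : ℝ) (hρ : 0 < ρ)
    (hP₀ : 0 < P₀) (hG₀ : 0 < G₀)
    (K : ℝ) (hK : 1 ≤ K)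
    (P G : ℝ) (hP : P = P₀ / K) (hG2 : G ^ 2 = G₀ ^ 2 / K)
    (hPge : Real.sqrt ((θ * P₀) / (ρ * G₀ ^ 2)) ≤ P) :
    θ / P + γ * G ^ 2 / P + ρ * G ^ 2 + ξ
      ≤ θ / P₀ + γ * G₀ ^ 2 / P₀ + ρ * G₀ ^ 2 + ξ := by
  have hK0 : 0 < K := zero_lt_one.trans_le hK
  have hres : θ * K ≤ ρ * G₀ ^ 2 * P₀ :=
    mul_le_of_sqrt_div_le_div (by positivity) hP₀ hK (hP ▸ hPge)
  have hgap : θ / P₀ - ρ * G₀ ^ 2 / K ≤ 0 := by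
    rw [sub_nonpos, div_le_div_iff₀ hP₀ hK0]
    linarith
  change convergenceBound θ γ ρ ξ P G ≤ convergenceBound θ γ ρ ξ P₀ G₀
  rw [hP, convergenceBound_partition θ γ ρ ξ P₀ G₀ K G hP₀.ne' hK0.ne' hG2]
  linarith [mul_nonpos_of_nonneg_of_nonpos (sub_nonneg.2 hK) hgap]

/-- Cohort partitioning with resource `P = P₀/K` and heterogeneity
`G² = G₀²/K` does not degrade the convergence bound
`h(P, G) = θ/P + γ·G²/P + ρ·G² + ξ` provided `P ≥ √((θ·P₀)/(ρ·G₀²))`. -/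
theorem cohort_partition_no_degradation
    (θ γ ρ ξ P₀ G₀ : ℝ) (hθ : 0 < θ) (hγ : 0 < γ) (hρ : 0 < ρ)
    (hP₀ : 0 < P₀) (hG₀ : 0 < G₀)
    (K : ℝ) (hK : 1 ≤ K)
    (P G : ℝ) (hP : P = P₀ / K) (hG : 0 ≤ G) (hG2 : G ^ 2 = G₀ ^ 2 / K)
    (hPge : Real.sqrt ((θ * P₀) / (ρ * G₀ ^ 2)) ≤ P) :
    θ / P + γ * G ^ 2 / P + ρ * G ^ 2 + ξ
      ≤ θ / P₀ + γ * G₀ ^ 2 / P₀ + ρ * G₀ ^ 2 + ξ :=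
  cohort_partition_no_degradation_general θ γ ρ ξ P₀ G₀ hρ hP₀ hG₀ K hK P G hP hG2 hPge
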